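/- arXiv:2510.18641 — 2 statements merged into one kernel-verified Lean document; each statement's English description precedes it below -/
import Mathlib

section
/- Let n ≥ 1, T > 0, s ∈ (0,1), m ∈ ℕ, and let 𝒪 ⊂ ℝⁿ be a nonempty open set. Then there exist functions u_1, u_2 ∈ 𝒮(ℝⁿ×ℝ), neither identically zero, such that u_1 = u_2 = 0 on 𝒪 × (−T,T) and 𝓗^{s}((∂_t − Δ)^m u_1) + 𝓗^{s} u_2 = 0 at every point of ℝⁿ×ℝ. In particular, the entanglement principle fails for the pair of exponents α_1 = m + s and α_2 = s, whose difference is an integer, so the nonresonance condition α_k − α_j ∉ ℤ cannot be dropped. -/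
open MeasureTheory Real Set Complex

noncomputable section

/-- A space-time point `(x, t)` with `x : Fin n → ℝ` and `t : ℝ`. -/
abbrev SpaceTime (n : ℕ) := (Fin n → ℝ) × ℝ

/-- Squared Euclidean norm `|x|² = ∑ xᵢ²`. -/
def sqNorm {n : ℕ} (x : Fin n → ℝ) : ℝ := ∑ i, x i ^ 2

/-- The Euclidean heat kernel `G_τ(x) = (4πτ)^{-n/2} exp(-|x|²/(4τ))`. -/
def heatKernel (n : ℕ) (τ : ℝ) (x : Fin n → ℝ) : ℝ :=
  (4 * π * τ) ^ (-(n : ℝ) / 2) * Real.exp (-(sqNorm x) / (4 * τ))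

/-- The parabolic evolution semigroup `(e^{-τ𝓗} u)(x,t) = ∫ G_τ(x-y) u(y, t-τ) dy`. -/
def heatSemigroup (n : ℕ) (τ : ℝ) (u : SpaceTime n → ℂ) (p : SpaceTime n) : ℂ :=
  ∫ y : Fin n → ℝ, (heatKernel n τ (p.1 - y) : ℂ) * u (y, p.2 - τ)

/-- The fractional heat operator
`𝓗^s u(x,t) = (1/Γ(-s)) ∫_0^∞ ((e^{-τ𝓗}u)(x,t) - u(x,t)) τ^{-1-s} dτ`. -/
def fracHeat (n : ℕ) (s : ℝ) (u : SpaceTime n → ℂ) (p : SpaceTime n) : ℂ :=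
  (1 / (Real.Gamma (-s) : ℂ)) *
    ∫ τ in Ioi (0 : ℝ), (heatSemigroup n τ u p - u p) * ((τ ^ (-1 - s) : ℝ) : ℂ)

/-- Partial derivative in the direction `v`. -/
def pderivDir (n : ℕ) (v : SpaceTime n) (u : SpaceTime n → ℂ) : SpaceTime n → ℂ :=
  fun p => fderiv ℝ u p v

/-- The `i`-th spatial coordinate direction. -/
def eSpace (n : ℕ) (i : Fin n) : SpaceTime n := (Pi.single i 1, 0)

/-- The time coordinate direction. -/
def eTime (n : ℕ) : SpaceTime n := (0, 1)

/-- The mixed partial derivative `D^β_{x,t} = ∂_t^{β₀} ∂_{x_1}^{β₁} ⋯ ∂_{x_n}^{β_n}`. -/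
def Dmixed (n : ℕ) (β0 : ℕ) (β : Fin n → ℕ) (u : SpaceTime n → ℂ) : SpaceTime n → ℂ :=
  (pderivDir n (eTime n))^[β0] <|
    (List.finRange n).foldr (fun i w => (pderivDir n (eSpace n i))^[β i] w) u

/-- The heat operator `∂_t - Δ_x`. -/
def heatOp (n : ℕ) (u : SpaceTime n → ℂ) : SpaceTime n → ℂ :=
  fun p => pderivDir n (eTime n) u p -
    ∑ i : Fin n, pderivDir n (eSpace n i) (pderivDir n (eSpace n i) u) p

/-- The space-time Fourier transform `û(ξ,ρ) = ∫ u(x,t) e^{-i(x·ξ + tρ)} dx dt`. -/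
def fourierST (n : ℕ) (u : SpaceTime n → ℂ) (q : SpaceTime n) : ℂ :=
  ∫ p : SpaceTime n, u p * Complex.exp (-Complex.I * (∑ i, p.1 i * q.1 i + p.2 * q.2))

/-- The parabolic symbol `iρ + |ξ|²`. -/
def parSymbol (n : ℕ) (q : SpaceTime n) : ℂ :=
  Complex.I * q.2 + (sqNorm q.1 : ℂ)

/-- `v ∈ C^∞((-∞,T); 𝒮(ℝⁿ))`: smooth on `ℝⁿ × (-∞,T)` and, together with all of its
mixed derivatives, decaying faster than any power of `x`, locally uniformly in `t < T`. -/
def SmoothSchwartzUpTo (n : ℕ) (T : ℝ) (v : SpaceTime n → ℂ) : Prop :=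
  ContDiffOn ℝ (⊤ : ℕ∞) v {p : SpaceTime n | p.2 < T} ∧
  ∀ (β0 : ℕ) (β : Fin n → ℕ) (k : ℕ) (a T' : ℝ), T' < T →
    ∃ C : ℝ, ∀ (x : Fin n → ℝ) (t : ℝ), a ≤ t → t ≤ T' →
      ‖x‖ ^ k * ‖Dmixed n β0 β v (x, t)‖ ≤ C

/-!
Remark 1.1 of the paper (Euclidean case): the entanglement principle fails for the
resonant pair of exponents `α₁ = m + s`, `α₂ = s`, whose difference is the integer `m`.
-/

/-! ### Auxiliary material for the proof -/

open scoped ContDiff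

namespace EntanglementAux

/-- `(t - c)^r` as a function on space-time. -/
def tp (n : ℕ) (c : ℝ) (r : ℕ) : SpaceTime n → ℂ := fun p => ((p.2 : ℂ) - c) ^ r

/-- The second coordinate as a real-linear map to `ℂ`. -/
def sndC (n : ℕ) : SpaceTime n →L[ℝ] ℂ :=
  Complex.ofRealCLM.comp (ContinuousLinearMap.snd ℝ (Fin n → ℝ) ℝ)

lemma tp_hasFDerivAt (n : ℕ) (c : ℝ) (r : ℕ) (p : SpaceTime n) :
    HasFDerivAt (tp n c r)
      (((r : ℂ) * ((p.2 : ℂ) - c) ^ (r - 1) * 1) • sndC n) p := by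
  have h1 : HasDerivAt (fun z : ℂ => (z - c) ^ r)
      ((r : ℂ) * ((p.2 : ℂ) - c) ^ (r - 1) * 1) ((sndC n) p) :=
    ((hasDerivAt_id _).sub_const (c : ℂ)).pow r
  exact h1.comp_hasFDerivAt p (sndC n).hasFDerivAt

lemma tp_contDiff (n : ℕ) (c : ℝ) (r : ℕ) : ContDiff ℝ ∞ (tp n c r) := by
  unfold tp
  exact ((Complex.ofRealCLM.contDiff.comp contDiff_snd).sub contDiff_const).pow r

lemma pderivDir_contDiff (n : ℕ) (v : SpaceTime n) {w : SpaceTime n → ℂ}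
    (hw : ContDiff ℝ ∞ w) : ContDiff ℝ ∞ (pderivDir n v w) := by
  unfold pderivDir
  exact (hw.fderiv_right (by simp)).clm_apply contDiff_const

lemma heatOp_contDiff (n : ℕ) {w : SpaceTime n → ℂ} (hw : ContDiff ℝ ∞ w) :
    ContDiff ℝ ∞ (heatOp n w) := by
  unfold heatOp
  exact (pderivDir_contDiff n _ hw).sub
    (ContDiff.sum fun i _ => pderivDir_contDiff n _ (pderivDir_contDiff n _ hw))

lemma pderivDir_tp_mul_time (n : ℕ) (c : ℝ) (r : ℕ) {w : SpaceTime n → ℂ} (p : SpaceTime n)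
    (hw : DifferentiableAt ℝ w p) :
    pderivDir n (eTime n) (fun q => tp n c r q * w q) p
      = (r : ℂ) * tp n c (r - 1) p * w p + tp n c r p * pderivDir n (eTime n) w p := by
  unfold pderivDir
  rw [((tp_hasFDerivAt n c r p).fun_mul hw.hasFDerivAt).fderiv]
  simp [sndC, eTime, tp, smul_eq_mul]
  ring

lemma pderivDir_tp_mul_space (n : ℕ) (c : ℝ) (r : ℕ) (i : Fin n) {w : SpaceTime n → ℂ}
    (p : SpaceTime n) (hw : DifferentiableAt ℝ w p) :
    pderivDir n (eSpace n i) (fun q => tp n c r q * w q) p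
      = tp n c r p * pderivDir n (eSpace n i) w p := by
  unfold pderivDir
  rw [((tp_hasFDerivAt n c r p).fun_mul hw.hasFDerivAt).fderiv]
  simp [sndC, eSpace, tp, smul_eq_mul]

lemma heatOp_tp_mul (n : ℕ) (c : ℝ) (r : ℕ) (hr : 1 ≤ r) {w : SpaceTime n → ℂ}
    (hw : ContDiff ℝ ∞ w) :
    heatOp n (fun q => tp n c r q * w q)
      = fun q => tp n c (r - 1) q * ((r : ℂ) * w q + tp n c 1 q * heatOp n w q) := by
  funext p
  have hdiff : ∀ q, DifferentiableAt ℝ w q := fun q => hw.differentiable (by simp) q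
  have hinner : ∀ i : Fin n, pderivDir n (eSpace n i) (fun q => tp n c r q * w q)
      = fun q => tp n c r q * pderivDir n (eSpace n i) w q := by
    intro i; funext q; exact pderivDir_tp_mul_space n c r i q (hdiff q)
  have hsum : ∀ i : Fin n,
      pderivDir n (eSpace n i) (pderivDir n (eSpace n i) (fun q => tp n c r q * w q)) p
      = tp n c r p * pderivDir n (eSpace n i) (pderivDir n (eSpace n i) w) p := by
    intro i
    rw [hinner i]
    exact pderivDir_tp_mul_space n c r i p
      ((pderivDir_contDiff n _ hw).differentiable (by simp) p)
  show pderivDir n (eTime n) (fun q => tp n c r q * w q) p - _ = _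
  rw [pderivDir_tp_mul_time n c r p (hdiff p), Finset.sum_congr rfl (fun i _ => hsum i),
    ← Finset.mul_sum]
  have htp : tp n c r p = tp n c (r - 1) p * tp n c 1 p := by
    simp only [tp, pow_one]
    rw [← pow_succ, Nat.sub_add_cancel hr]
  rw [htp]
  show _ = tp n c (r - 1) p * ((r : ℂ) * w p + tp n c 1 p *
    (pderivDir n (eTime n) w p - ∑ i : Fin n,
      pderivDir n (eSpace n i) (pderivDir n (eSpace n i) w) p))
  ring

/-- The auxiliary sequence arising from repeatedly applying the heat operator to
`(t-c)^m · w₀`. -/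
def auxW (n : ℕ) (c : ℝ) (m : ℕ) (w0 : SpaceTime n → ℂ) : ℕ → SpaceTime n → ℂ
  | 0 => w0
  | j + 1 => fun q => ((m - j : ℕ) : ℂ) * auxW n c m w0 j q
      + tp n c 1 q * heatOp n (auxW n c m w0 j) q

lemma auxW_contDiff (n : ℕ) (c : ℝ) (m : ℕ) {w0 : SpaceTime n → ℂ}
    (hw0 : ContDiff ℝ ∞ w0) : ∀ j, ContDiff ℝ ∞ (auxW n c m w0 j)
  | 0 => hw0
  | j + 1 => by
    have ih := auxW_contDiff n c m hw0 j
    exact (contDiff_const.mul ih).add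
      ((tp_contDiff n c 1).mul (heatOp_contDiff n ih))

lemma heatOp_iter_tp (n : ℕ) (c : ℝ) (m : ℕ) {w0 : SpaceTime n → ℂ}
    (hw0 : ContDiff ℝ ∞ w0) :
    ∀ j, j ≤ m → (heatOp n)^[j] (fun q => tp n c m q * w0 q)
      = fun q => tp n c (m - j) q * auxW n c m w0 j q
  | 0, _ => by simp [auxW]
  | j + 1, hj => by
    rw [Function.iterate_succ_apply', heatOp_iter_tp n c m hw0 j (by omega),
      heatOp_tp_mul n c (m - j) (by omega) (auxW_contDiff n c m hw0 j)]
    have h1 : m - j - 1 = m - (j + 1) := by omega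
    funext q
    simp only [auxW, h1]

lemma auxW_ne_zero (n : ℕ) (c : ℝ) (m : ℕ) {w0 : SpaceTime n → ℂ} (x : Fin n → ℝ)
    (hx : w0 (x, c) ≠ 0) : ∀ j, j ≤ m → auxW n c m w0 j (x, c) ≠ 0
  | 0, _ => hx
  | j + 1, hj => by
    have ih := auxW_ne_zero n c m x hx j (by omega)
    have htp : tp n c 1 ((x, c) : SpaceTime n) = 0 := by simp [tp]
    show ((m - j : ℕ) : ℂ) * auxW n c m w0 j (x, c)
      + tp n c 1 ((x, c) : SpaceTime n) * heatOp n (auxW n c m w0 j) (x, c) ≠ 0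
    rw [htp, zero_mul, add_zero]
    exact mul_ne_zero (Nat.cast_ne_zero.2 (by omega)) ih

/-! ### Locality of the heat operator -/

lemma pderivDir_eq_zero_on (n : ℕ) (v : SpaceTime n) {u : SpaceTime n → ℂ}
    {U : Set (SpaceTime n)} (hU : IsOpen U) (hu : ∀ q ∈ U, u q = 0)
    {p : SpaceTime n} (hp : p ∈ U) : pderivDir n v u p = 0 := by
  have h : u =ᶠ[nhds p] (fun _ => (0 : ℂ)) :=
    Filter.eventuallyEq_iff_exists_mem.2 ⟨U, hU.mem_nhds hp, hu⟩
  unfold pderivDir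
  rw [h.fderiv_eq, fderiv_fun_const]
  rfl

lemma heatOp_eq_zero_on (n : ℕ) {u : SpaceTime n → ℂ} {U : Set (SpaceTime n)}
    (hU : IsOpen U) (hu : ∀ q ∈ U, u q = 0) {p : SpaceTime n} (hp : p ∈ U) :
    heatOp n u p = 0 := by
  unfold heatOp
  rw [pderivDir_eq_zero_on n _ hU hu hp, Finset.sum_congr rfl (fun i _ =>
    pderivDir_eq_zero_on n _ hU (fun q hq => pderivDir_eq_zero_on n _ hU hu hq) hp)]
  simp

lemma heatOp_iter_eq_zero_on (n : ℕ) (m : ℕ) {u : SpaceTime n → ℂ} {U : Set (SpaceTime n)}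
    (hU : IsOpen U) (hu : ∀ q ∈ U, u q = 0) {p : SpaceTime n} (hp : p ∈ U) :
    (heatOp n)^[m] u p = 0 := by
  induction m generalizing p with
  | zero => exact hu p hp
  | succ k ih =>
    rw [Function.iterate_succ_apply']
    exact heatOp_eq_zero_on n hU (fun q hq => ih hq) hp

/-! ### Schwartz functions from compactly supported smooth functions -/

lemma schwartz_of_compactSupport {n : ℕ} (f : SpaceTime n → ℂ) (hf : ContDiff ℝ ∞ f)
    (h : HasCompactSupport f) : ∃ F : SchwartzMap (SpaceTime n) ℂ, ⇑F = f := by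
  refine ⟨⟨f, hf, fun k m => ?_⟩, rfl⟩
  obtain ⟨C, hC⟩ := ((continuous_norm.pow k).mul
    (hf.continuous_iteratedFDeriv (mod_cast le_top)).norm).bounded_above_of_compact_support
    ((h.iteratedFDeriv m).norm.mul_left)
  refine ⟨C, fun x => ?_⟩
  have := hC x
  rwa [Real.norm_eq_abs, _root_.abs_of_nonneg (a := ((fun a : SpaceTime n => ‖a‖) ^ k * fun x => ‖iteratedFDeriv ℝ m f x‖) x)
    (mul_nonneg (pow_nonneg (norm_nonneg _) _) (norm_nonneg _))] at this

/-! ### The heat operator on Schwartz space -/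

/-- The heat operator as a continuous linear map on Schwartz space. -/
def heatOpCLM (n : ℕ) : SchwartzMap (SpaceTime n) ℂ →L[ℝ] SchwartzMap (SpaceTime n) ℂ :=
  LineDeriv.lineDerivOpCLM ℝ (SchwartzMap (SpaceTime n) ℂ) (eTime n) - ∑ i : Fin n,
    (LineDeriv.lineDerivOpCLM ℝ (SchwartzMap (SpaceTime n) ℂ) (eSpace n i)).comp (LineDeriv.lineDerivOpCLM ℝ (SchwartzMap (SpaceTime n) ℂ) (eSpace n i))

lemma heatOpCLM_coe (n : ℕ) (f : SchwartzMap (SpaceTime n) ℂ) :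
    ⇑(heatOpCLM n f) = heatOp n ⇑f := by
  funext p
  have hpd : ∀ (v : SpaceTime n) (g : SchwartzMap (SpaceTime n) ℂ),
      ⇑(LineDeriv.lineDerivOpCLM ℝ (SchwartzMap (SpaceTime n) ℂ) v g) = pderivDir n v ⇑g := fun v g => rfl
  have hsum : ∀ (g : Fin n → SchwartzMap (SpaceTime n) ℂ),
      (∑ i : Fin n, g i) p = ∑ i : Fin n, g i p := by
    intro g
    simp
  simp only [heatOpCLM, ContinuousLinearMap.sub_apply, ContinuousLinearMap.sum_apply,
    ContinuousLinearMap.comp_apply, SchwartzMap.sub_apply, heatOp]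
  simp only [hpd]


lemma heatOpCLM_iter_coe (n : ℕ) (m : ℕ) (f : SchwartzMap (SpaceTime n) ℂ) :
    ⇑((heatOpCLM n)^[m] f) = (heatOp n)^[m] ⇑f := by
  induction m with
  | zero => rfl
  | succ k ih =>
    rw [Function.iterate_succ_apply', Function.iterate_succ_apply', heatOpCLM_coe, ih]

/-! ### Negation and the fractional heat operator -/

lemma heatSemigroup_neg (n : ℕ) (τ : ℝ) (u : SpaceTime n → ℂ) (p : SpaceTime n) :
    heatSemigroup n τ (fun q => -u q) p = -heatSemigroup n τ u p := by
  unfold heatSemigroup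
  rw [← integral_neg]
  congr 1
  funext y
  ring

lemma fracHeat_add_neg (n : ℕ) (s : ℝ) (u : SpaceTime n → ℂ) (p : SpaceTime n) :
    fracHeat n s u p + fracHeat n s (fun q => -u q) p = 0 := by
  unfold fracHeat
  have h : ∫ τ in Set.Ioi (0 : ℝ),
      (heatSemigroup n τ (fun q => -u q) p - (fun q => -u q) p) * ((τ ^ (-1 - s) : ℝ) : ℂ)
      = -∫ τ in Set.Ioi (0 : ℝ), (heatSemigroup n τ u p - u p) * ((τ ^ (-1 - s) : ℝ) : ℂ) := by
    rw [← integral_neg]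
    congr 1
    funext τ
    rw [heatSemigroup_neg]
    ring
  rw [h]
  ring

end EntanglementAux

theorem entanglement_fails_for_resonant_exponents
    (n : ℕ) (hn : 1 ≤ n) (T : ℝ) (hT : 0 < T)
    (s : ℝ) (hs : s ∈ Ioo (0 : ℝ) 1) (m : ℕ) (hm : 1 ≤ m)
    (𝒪 : Set (Fin n → ℝ)) (h𝒪open : IsOpen 𝒪) (h𝒪ne : 𝒪.Nonempty) :
    ∃ u1 u2 : SchwartzMap (SpaceTime n) ℂ,
      ⇑u1 ≠ 0 ∧ ⇑u2 ≠ 0 ∧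
      (∀ x ∈ 𝒪, ∀ t ∈ Ioo (-T) T, u1 (x, t) = 0 ∧ u2 (x, t) = 0) ∧
      ∀ p : SpaceTime n,
        fracHeat n s ((heatOp n)^[m] ⇑u1) p + fracHeat n s (⇑u2) p = 0 := by
  classical
  open EntanglementAux in
  set t0 : ℝ := 2 * T with ht0
  let φ : ContDiffBump (0 : Fin n → ℝ) := ⟨1, 2, one_pos, one_lt_two⟩
  let χ : ContDiffBump t0 := ⟨T / 2, T, by linarith, by linarith⟩
  set w0 : SpaceTime n → ℂ := fun p => ((φ p.1 : ℝ) : ℂ) * ((χ p.2 : ℝ) : ℂ) with hw0def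
  have hw0 : ContDiff ℝ (⊤ : ℕ∞) w0 :=
    (Complex.ofRealCLM.contDiff.comp (φ.contDiff.comp contDiff_fst)).mul
      (Complex.ofRealCLM.contDiff.comp (χ.contDiff.comp contDiff_snd))
  set u1f : SpaceTime n → ℂ := fun p => EntanglementAux.tp n t0 m p * w0 p with hu1fdef
  have hu1s : ContDiff ℝ (⊤ : ℕ∞) u1f := (EntanglementAux.tp_contDiff n t0 m).mul hw0
  -- compact support
  have hu1cs : HasCompactSupport u1f := by
    apply HasCompactSupport.intro
      ((isCompact_closedBall (0 : Fin n → ℝ) 2).prod (isCompact_closedBall t0 T))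
    intro p hp
    simp only [Set.mem_prod, not_and_or] at hp
    have hzero : w0 p = 0 := by
      rcases hp with h | h
      · have hφ : φ p.1 = 0 := by
          by_contra hne
          exact h (Metric.ball_subset_closedBall
            (φ.support_eq ▸ Function.mem_support.2 hne))
        simp [hw0def, hφ]
      · have hχ : χ p.2 = 0 := by
          by_contra hne
          exact h (Metric.ball_subset_closedBall
            (χ.support_eq ▸ Function.mem_support.2 hne))
        simp [hw0def, hχ]
    simp [hu1fdef, hzero]
  obtain ⟨u1, hu1⟩ := EntanglementAux.schwartz_of_compactSupport u1f hu1s hu1cs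
  have hiter : ⇑((EntanglementAux.heatOpCLM n)^[m] u1) = (heatOp n)^[m] u1f := by
    rw [EntanglementAux.heatOpCLM_iter_coe, hu1]
  have hu2coe : ⇑(-((EntanglementAux.heatOpCLM n)^[m] u1))
      = fun q => -((heatOp n)^[m] u1f q) := by
    funext q
    show -(((EntanglementAux.heatOpCLM n)^[m] u1) q) = -((heatOp n)^[m] u1f q)
    rw [congrFun hiter q]
  -- the open set where u1f vanishes
  have hUopen : IsOpen {p : SpaceTime n | p.2 < T} :=
    isOpen_lt continuous_snd continuous_const
  have hu1U : ∀ q ∈ {p : SpaceTime n | p.2 < T}, u1f q = 0 := by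
    intro q hq
    have hχ : χ q.2 = 0 := by
      by_contra hne
      have : q.2 ∈ Metric.ball t0 T := χ.support_eq ▸ Function.mem_support.2 hne
      rw [Metric.mem_ball, Real.dist_eq, abs_lt] at this
      have := this.1
      have hq2 : q.2 < T := hq
      simp only [ht0] at this
      linarith
    simp [hu1fdef, hw0def, hχ]
  refine ⟨u1, -((EntanglementAux.heatOpCLM n)^[m] u1), ?_, ?_, ?_, ?_⟩
  · -- u1 ≠ 0
    intro h0
    rw [hu1] at h0
    have h1 : u1f ((0 : Fin n → ℝ), t0 + T / 4) = 0 := by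
      rw [h0]; rfl
    have hφ1 : φ (0 : Fin n → ℝ) = 1 :=
      φ.one_of_mem_closedBall (by simp [Metric.mem_closedBall, φ.rIn_pos.le])
    have hχ1 : χ (t0 + T / 4) = 1 := by
      apply χ.one_of_mem_closedBall
      rw [Metric.mem_closedBall, Real.dist_eq]
      show |t0 + T / 4 - t0| ≤ T / 2
      rw [_root_.abs_of_nonneg (by linarith)]
      linarith
    have htp : EntanglementAux.tp n t0 m (((0 : Fin n → ℝ), t0 + T / 4) : SpaceTime n)
        = ((T / 4 : ℝ) : ℂ) ^ m := by
      simp only [EntanglementAux.tp]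
      norm_num
    have hne : u1f ((0 : Fin n → ℝ), t0 + T / 4) ≠ 0 := by
      rw [hu1fdef]
      simp only [hw0def, hφ1, hχ1, htp, Complex.ofReal_one, one_mul, mul_one]
      exact pow_ne_zero m (by
        exact_mod_cast (by linarith : (T / 4 : ℝ) ≠ 0))
    exact hne h1
  · -- u2 ≠ 0
    intro h0
    rw [hu2coe] at h0
    have h1 : -((heatOp n)^[m] u1f (((0 : Fin n → ℝ), t0) : SpaceTime n)) = 0 :=
      congrFun h0 _
    have hform := congrFun
      (EntanglementAux.heatOp_iter_tp n t0 m hw0 m le_rfl) (((0 : Fin n → ℝ), t0) : SpaceTime n)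
    have htp0 : EntanglementAux.tp n t0 (m - m) (((0 : Fin n → ℝ), t0) : SpaceTime n) = 1 := by
      simp [EntanglementAux.tp, Nat.sub_self]
    have hφ1 : φ (0 : Fin n → ℝ) = 1 :=
      φ.one_of_mem_closedBall (by simp [Metric.mem_closedBall, φ.rIn_pos.le])
    have hχ1 : χ t0 = 1 := χ.one_of_mem_closedBall (by
      rw [Metric.mem_closedBall, dist_self]; positivity)
    have hw0ne : w0 (((0 : Fin n → ℝ), t0) : SpaceTime n) ≠ 0 := by
      simp [hw0def, hφ1, hχ1]
    have hWne := EntanglementAux.auxW_ne_zero n t0 m (0 : Fin n → ℝ) hw0ne m le_rfl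
    rw [← hu1fdef] at hform
    rw [hform, htp0, one_mul] at h1
    exact hWne (neg_eq_zero.1 h1)
  · -- vanishing on 𝒪 × (-T, T)
    intro x hx t ht
    have hmem : ((x, t) : SpaceTime n) ∈ {p : SpaceTime n | p.2 < T} := ht.2
    constructor
    · show u1 ((x, t) : SpaceTime n) = 0
      rw [congrFun hu1 ((x, t) : SpaceTime n)]
      exact hu1U _ hmem
    · show (-((EntanglementAux.heatOpCLM n)^[m] u1)) ((x, t) : SpaceTime n) = 0
      rw [congrFun hu2coe ((x, t) : SpaceTime n)]
      rw [EntanglementAux.heatOp_iter_eq_zero_on n m hUopen hu1U hmem]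
      simp
  · -- the PDE
    intro p
    have harg : (heatOp n)^[m] ⇑u1 = (heatOp n)^[m] u1f := by rw [hu1]
    rw [harg, hu2coe]
    exact EntanglementAux.fracHeat_add_neg n s ((heatOp n)^[m] u1f) p

end
end

section
/- Let n ≥ 1, u ∈ 𝒮(ℝⁿ×ℝ), and m ∈ ℕ. Then for every τ > 0 and every (x,t) ∈ ℝⁿ×ℝ, ∫_{ℝⁿ} G_τ(x−y) ((∂_t − Δ)^m u)(y, t−τ) dy = (−1)^m ∂_τ^m [ ∫_{ℝⁿ} G_τ(x−y) u(y, t−τ) dy ]; that is, (e^{−τ𝓗}(∂_t−Δ)^m u)(x,t) = (−1)^m ∂_τ^m (e^{−τ𝓗}u)(x,t). -/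
open MeasureTheory Real Set Complex

noncomputable section

variable {n : ℕ}

lemma sqNorm_nonneg (x : Fin n → ℝ) : 0 ≤ sqNorm x :=
  Finset.sum_nonneg fun i _ => sq_nonneg _

lemma continuous_sqNorm : Continuous (sqNorm (n := n)) := by
  unfold sqNorm
  exact continuous_finset_sum _ fun i _ => (continuous_apply i).pow 2

lemma integrable_gauss {c : ℝ} (hc : 0 < c) :
    Integrable (fun z : Fin n → ℝ => rexp (-c * sqNorm z)) := by
  have : (fun z : Fin n → ℝ => rexp (-c * sqNorm z))
      = fun z : Fin n → ℝ => ∏ i, rexp (-c * (z i) ^ 2) := by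
    funext z
    rw [← Real.exp_sum]
    congr 1
    rw [sqNorm, Finset.mul_sum]
  rw [this]
  exact Integrable.fintype_prod fun _ => integrable_exp_neg_mul_sq hc

lemma integrable_gauss_sub {c : ℝ} (hc : 0 < c) (x : Fin n → ℝ) :
    Integrable (fun z : Fin n → ℝ => rexp (-c * sqNorm (x - z))) :=
  (integrable_gauss hc).comp_sub_left x

lemma qexp {c q : ℝ} (hc : 0 < c) (hq : 0 ≤ q) :
    q * rexp (-c * q) ≤ (2 / c) * rexp (-(c / 2) * q) := by
  have h1 : q * rexp (-(c / 2) * q) ≤ 2 / c := by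
    have h2 : c / 2 * q ≤ rexp (c / 2 * q) := by
      nlinarith [Real.add_one_le_exp (c / 2 * q)]
    have h3 : q ≤ (2 / c) * rexp (c / 2 * q) := by
      rw [div_mul_eq_mul_div, le_div_iff₀ hc]
      nlinarith
    calc q * rexp (-(c / 2) * q) ≤ (2 / c) * rexp (c / 2 * q) * rexp (-(c / 2) * q) := by
          apply mul_le_mul_of_nonneg_right h3 (Real.exp_nonneg _)
      _ = 2 / c := by rw [mul_assoc, ← Real.exp_add]; ring_nf; simp
  calc q * rexp (-c * q) = (q * rexp (-(c/2) * q)) * rexp (-(c/2)*q) := by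
        rw [mul_assoc, ← Real.exp_add]; ring_nf
    _ ≤ (2 / c) * rexp (-(c / 2) * q) :=
        mul_le_mul_of_nonneg_right h1 (Real.exp_nonneg _)

lemma sqNorm_sub_le (a b : Fin n → ℝ) : sqNorm (a - b) ≤ 2 * sqNorm a + 2 * sqNorm b := by
  unfold sqNorm
  rw [Finset.mul_sum, Finset.mul_sum, ← Finset.sum_add_distrib]
  apply Finset.sum_le_sum
  intro i _
  simp only [Pi.sub_apply]
  nlinarith [sq_nonneg (a i + b i)]

lemma sqNorm_smul_single (i : Fin n) (r : ℝ) :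
    sqNorm (r • (Pi.single i 1 : Fin n → ℝ)) = r ^ 2 := by
  unfold sqNorm
  rw [Finset.sum_eq_single i]
  · simp
  · intro j _ hj
    simp [Pi.single_eq_of_ne hj]
  · simp

lemma single_sq_le_sqNorm (z : Fin n → ℝ) (i : Fin n) : z i ^ 2 ≤ sqNorm z :=
  Finset.single_le_sum (fun j _ => sq_nonneg (z j)) (Finset.mem_univ i)

lemma abs_le_one_add_sqNorm (z : Fin n → ℝ) (i : Fin n) : |z i| ≤ 1 + sqNorm z := by
  have := single_sq_le_sqNorm z i
  nlinarith [sq_nonneg (|z i| - 1), _root_.sq_abs (z i)]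

def D1G (n : ℕ) (i : Fin n) (τ : ℝ) (z : Fin n → ℝ) : ℝ :=
  -(z i) / (2 * τ) * heatKernel n τ z

def D2G (n : ℕ) (i : Fin n) (τ : ℝ) (z : Fin n → ℝ) : ℝ :=
  ((z i) ^ 2 / (4 * τ ^ 2) - 1 / (2 * τ)) * heatKernel n τ z

def DG (n : ℕ) (τ : ℝ) (z : Fin n → ℝ) : ℝ :=
  (sqNorm z / (4 * τ ^ 2) - (n : ℝ) / (2 * τ)) * heatKernel n τ z

lemma heatKernel_nonneg {τ : ℝ} (hτ : 0 < τ) (z : Fin n → ℝ) : 0 ≤ heatKernel n τ z := by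
  unfold heatKernel
  positivity

lemma continuous_heatKernel (τ : ℝ) : Continuous (heatKernel n τ) := by
  unfold heatKernel
  exact continuous_const.mul ((continuous_sqNorm.neg.div_const _).rexp)

lemma continuous_D1G (i : Fin n) (τ : ℝ) : Continuous (D1G n i τ) := by
  unfold D1G
  exact (((continuous_apply i).neg.div_const _).mul (continuous_heatKernel τ))

lemma continuous_D2G (i : Fin n) (τ : ℝ) : Continuous (D2G n i τ) := by
  unfold D2G
  exact ((((continuous_apply i).pow 2).div_const _).sub continuous_const).mul
    (continuous_heatKernel τ)

lemma continuous_DG (τ : ℝ) : Continuous (DG n τ) := by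
  unfold DG
  exact (((continuous_sqNorm.div_const _)).sub continuous_const).mul (continuous_heatKernel τ)

lemma hasDerivAt_sqNorm_line (z : Fin n → ℝ) (i : Fin n) (r : ℝ) :
    HasDerivAt (fun ρ : ℝ => sqNorm (z + ρ • (Pi.single i 1 : Fin n → ℝ))) (2 * (z i + r)) r := by
  have h : (fun ρ : ℝ => sqNorm (z + ρ • (Pi.single i 1 : Fin n → ℝ)))
      = fun ρ : ℝ => ∑ j, (z j + ρ * (Pi.single i 1 : Fin n → ℝ) j) ^ 2 := by
    funext ρ; unfold sqNorm; congr 1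
  rw [h]
  have h2 : (2 : ℝ) * (z i + r) = ∑ j, 2 * (z j + r * (Pi.single i 1 : Fin n → ℝ) j) ^ 1 * (Pi.single i 1 : Fin n → ℝ) j := by
    rw [Finset.sum_eq_single i]
    · simp
    · intro j _ hj; simp [Pi.single_eq_of_ne hj]
    · simp
  rw [h2]
  have := HasDerivAt.sum (u := Finset.univ) (fun j _ =>
    (((hasDerivAt_id r).mul_const ((Pi.single i 1 : Fin n → ℝ) j)).const_add (z j)).pow 2)
  have e : (fun ρ : ℝ => ∑ j, (z j + ρ * (Pi.single i 1 : Fin n → ℝ) j) ^ 2)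
      = ∑ j, (fun x => z j + id x * (Pi.single i 1 : Fin n → ℝ) j) ^ 2 := by
    funext ρ; simp
  rw [e]
  exact this.congr_deriv (by simp)

lemma hasDerivAt_heatKernel_line {τ : ℝ} (hτ : 0 < τ) (z : Fin n → ℝ) (i : Fin n) (r : ℝ) :
    HasDerivAt (fun ρ : ℝ => heatKernel n τ (z + ρ • (Pi.single i 1 : Fin n → ℝ)))
      (D1G n i τ (z + r • (Pi.single i 1 : Fin n → ℝ))) r := by
  have h1 : HasDerivAt (fun ρ : ℝ => -(sqNorm (z + ρ • (Pi.single i 1 : Fin n → ℝ))) / (4 * τ))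
      (-(2 * (z i + r)) / (4 * τ)) r := (hasDerivAt_sqNorm_line z i r).neg.div_const _
  have h2 := (h1.exp).const_mul ((4 * π * τ) ^ (-(n : ℝ) / 2))
  refine h2.congr_deriv (Eq.symm ?_)
  · unfold D1G heatKernel
    have hz : (z + r • (Pi.single i 1 : Fin n → ℝ)) i = z i + r := by simp
    rw [hz]
    field_simp
    ring

lemma hasDerivAt_D1G_line {τ : ℝ} (hτ : 0 < τ) (z : Fin n → ℝ) (i : Fin n) (r : ℝ) :
    HasDerivAt (fun ρ : ℝ => D1G n i τ (z + ρ • (Pi.single i 1 : Fin n → ℝ)))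
      (D2G n i τ (z + r • (Pi.single i 1 : Fin n → ℝ))) r := by
  have hlin : HasDerivAt (fun ρ : ℝ => -(z i + ρ) / (2 * τ)) (-1 / (2 * τ)) r := by
    simpa using (((hasDerivAt_id r).const_add (z i)).neg.div_const (2 * τ))
  have h : HasDerivAt (fun ρ : ℝ => -(z i + ρ) / (2 * τ) * heatKernel n τ (z + ρ • (Pi.single i 1 : Fin n → ℝ))) _ r :=
    hlin.mul (hasDerivAt_heatKernel_line hτ z i r)
  have hfun : (fun ρ : ℝ => -(z i + ρ) / (2 * τ) * heatKernel n τ (z + ρ • (Pi.single i 1 : Fin n → ℝ)))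
      = fun ρ : ℝ => D1G n i τ (z + ρ • (Pi.single i 1 : Fin n → ℝ)) := by
    funext ρ; unfold D1G; congr 2; simp
  rw [hfun] at h
  refine h.congr_deriv (Eq.symm ?_)
  unfold D2G D1G heatKernel
  have hz : (z + r • (Pi.single i 1 : Fin n → ℝ)) i = z i + r := by simp
  rw [hz]
  field_simp
  ring

lemma hasDerivAt_heatKernel_time {σ : ℝ} (hσ : 0 < σ) (z : Fin n → ℝ) :
    HasDerivAt (fun σ' : ℝ => heatKernel n σ' z) (DG n σ z) σ := by
  have h4πσ : 0 < 4 * π * σ := by positivity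
  have hA : HasDerivAt (fun σ' : ℝ => (4 * π * σ') ^ (-(n : ℝ) / 2))
      ((-(n : ℝ) / 2) * (4 * π * σ) ^ (-(n : ℝ) / 2 - 1) * (4 * π)) σ := by
    have hbase : HasDerivAt (fun σ' : ℝ => 4 * π * σ') (4 * π) σ := by
      simpa using ((hasDerivAt_id σ).const_mul (4 * π))
    exact (Real.hasDerivAt_rpow_const (x := 4 * π * σ) (p := -(n : ℝ) / 2)
      (Or.inl h4πσ.ne')).comp σ hbase
  have hB : HasDerivAt (fun σ' : ℝ => rexp (-(sqNorm z) / (4 * σ')))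
      (rexp (-(sqNorm z) / (4 * σ)) * (sqNorm z / (4 * σ ^ 2))) σ := by
    have hinner : HasDerivAt (fun σ' : ℝ => -(sqNorm z) / (4 * σ'))
        (sqNorm z / (4 * σ ^ 2)) σ := by
      have h2 := (hasDerivAt_inv hσ.ne').const_mul (-(sqNorm z) / 4)
      have hfun : (fun σ' : ℝ => -(sqNorm z) / (4 * σ'))
          = fun σ' : ℝ => -(sqNorm z) / 4 * (σ')⁻¹ := by
        funext σ'; rw [← div_div, div_eq_mul_inv]
      rw [hfun]
      refine h2.congr_deriv (Eq.symm ?_)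
      field_simp
    exact hinner.exp
  have h := hA.mul hB
  have hK : (fun σ' : ℝ => heatKernel n σ' z)
      = fun σ' : ℝ => (4 * π * σ') ^ (-(n : ℝ) / 2) * rexp (-(sqNorm z) / (4 * σ')) := by
    funext σ'; rfl
  rw [hK]
  refine h.congr_deriv (Eq.symm ?_)
  unfold DG heatKernel
  rw [Real.rpow_sub_one h4πσ.ne']
  field_simp
  ring

lemma kernel_bound {τ : ℝ} (hτ : 0 < τ) :
    ∃ K : ℝ, 0 ≤ K ∧ ∀ z : Fin n → ℝ,
      |heatKernel n τ z| ≤ K * rexp (-(1 / (8 * τ)) * sqNorm z) ∧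
      ∀ i : Fin n, |D1G n i τ z| ≤ K * rexp (-(1 / (8 * τ)) * sqNorm z) ∧
        |D2G n i τ z| ≤ K * rexp (-(1 / (8 * τ)) * sqNorm z) := by
  set C : ℝ := (4 * π * τ) ^ (-(n : ℝ) / 2) with hC
  have hCpos : 0 < C := by rw [hC]; positivity
  refine ⟨C * (1 + (1 + 8 * τ) / (2 * τ) + (8 * τ / (4 * τ ^ 2) + 1 / (2 * τ))),
    by positivity, fun z => ?_⟩
  set q := sqNorm z with hq
  have hq0 : 0 ≤ q := sqNorm_nonneg z
  have hexp : rexp (-q / (4 * τ)) ≤ rexp (-(1 / (8 * τ)) * q) := by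
    apply Real.exp_le_exp.2
    have h48 : q / (8 * τ) ≤ q / (4 * τ) := by
      rw [div_le_div_iff₀ (by positivity) (by positivity)]
      nlinarith
    have e1 : -q / (4 * τ) = -(q / (4 * τ)) := by ring
    have e2 : -(1 / (8 * τ)) * q = -(q / (8 * τ)) := by ring
    rw [e1, e2]
    exact neg_le_neg h48
  have hqexp : q * rexp (-q / (4 * τ)) ≤ 8 * τ * rexp (-(1 / (8 * τ)) * q) := by
    have := qexp (c := 1 / (4 * τ)) (by positivity) hq0
    have he : -q / (4 * τ) = -(1 / (4 * τ)) * q := by ring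
    have he2 : -(1 / (4 * τ) / 2) * q = -(1 / (8 * τ)) * q := by ring
    rw [he]
    calc q * rexp (-(1 / (4 * τ)) * q) ≤ (2 / (1 / (4 * τ))) * rexp (-(1 / (4 * τ) / 2) * q) :=
          this
      _ = 8 * τ * rexp (-(1 / (8 * τ)) * q) := by rw [he2]; congr 1; field_simp; ring
  have hG : heatKernel n τ z = C * rexp (-q / (4 * τ)) := rfl
  have hGpos : 0 ≤ heatKernel n τ z := heatKernel_nonneg hτ z
  have hexp_pos : 0 ≤ rexp (-(1 / (8 * τ)) * q) := (Real.exp_pos _).le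
  have hGbd : heatKernel n τ z ≤ C * rexp (-(1 / (8 * τ)) * q) := by
    rw [hG]; exact mul_le_mul_of_nonneg_left hexp hCpos.le
  have hGqbd : q * heatKernel n τ z ≤ C * (8 * τ) * rexp (-(1 / (8 * τ)) * q) := by
    rw [hG]
    calc q * (C * rexp (-q / (4 * τ))) = C * (q * rexp (-q / (4 * τ))) := by ring
      _ ≤ C * (8 * τ * rexp (-(1 / (8 * τ)) * q)) := mul_le_mul_of_nonneg_left hqexp hCpos.le
      _ = C * (8 * τ) * rexp (-(1 / (8 * τ)) * q) := by ring
  refine ⟨?_, fun i => ⟨?_, ?_⟩⟩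
  · rw [_root_.abs_of_nonneg hGpos]
    calc heatKernel n τ z ≤ C * rexp (-(1 / (8 * τ)) * q) := hGbd
      _ ≤ _ := by
          apply mul_le_mul_of_nonneg_right _ hexp_pos
          have t1 : (0:ℝ) ≤ (1 + 8 * τ) / (2 * τ) := by positivity
          have t2 : (0:ℝ) ≤ 8 * τ / (4 * τ ^ 2) + 1 / (2 * τ) := by positivity
          nlinarith
  · -- D1G
    have habs : |z i| ≤ 1 + q := abs_le_one_add_sqNorm z i
    have heq : |D1G n i τ z| = |z i| / (2 * τ) * heatKernel n τ z := by
      unfold D1G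
      rw [abs_mul, _root_.abs_of_nonneg hGpos, abs_div, abs_neg,
        _root_.abs_of_nonneg (by positivity : (0:ℝ) ≤ 2 * τ)]
    have h1 : |z i| * heatKernel n τ z ≤ C * (1 + 8 * τ) * rexp (-(1 / (8 * τ)) * q) := by
      nlinarith [mul_le_mul_of_nonneg_right habs hGpos]
    rw [heq, div_mul_eq_mul_div, div_le_iff₀ (by positivity : (0:ℝ) < 2 * τ)]
    have hK8 : C * (1 + 8 * τ) * rexp (-(1 / (8 * τ)) * q)
        ≤ C * (1 + (1 + 8 * τ) / (2 * τ) + (8 * τ / (4 * τ ^ 2) + 1 / (2 * τ)))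
          * rexp (-(1 / (8 * τ)) * q) * (2 * τ) := by
      have e1 : C * (1 + (1 + 8 * τ) / (2 * τ) + (8 * τ / (4 * τ ^ 2) + 1 / (2 * τ)))
          * rexp (-(1 / (8 * τ)) * q) * (2 * τ)
          = C * ((1 + (1 + 8 * τ) / (2 * τ) + (8 * τ / (4 * τ ^ 2) + 1 / (2 * τ))) * (2 * τ))
            * rexp (-(1 / (8 * τ)) * q) := by ring
      rw [e1]
      apply mul_le_mul_of_nonneg_right _ hexp_pos
      apply mul_le_mul_of_nonneg_left _ hCpos.le
      have : (1 + (1 + 8 * τ) / (2 * τ) + (8 * τ / (4 * τ ^ 2) + 1 / (2 * τ))) * (2 * τ)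
          = 2 * τ + (1 + 8 * τ) + (8 * τ * (2 * τ) / (4 * τ ^ 2) + 1) := by field_simp
      rw [this]
      nlinarith [sq_nonneg τ, div_nonneg (by positivity : (0:ℝ) ≤ 8 * τ * (2 * τ)) (by positivity : (0:ℝ) ≤ 4 * τ ^ 2)]
    exact h1.trans hK8
  · -- D2G
    have hzq : z i ^ 2 ≤ q := single_sq_le_sqNorm z i
    have heq : |D2G n i τ z| ≤ (q / (4 * τ ^ 2) + 1 / (2 * τ)) * heatKernel n τ z := by
      unfold D2G
      rw [abs_mul, _root_.abs_of_nonneg hGpos]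
      apply mul_le_mul_of_nonneg_right _ hGpos
      calc |z i ^ 2 / (4 * τ ^ 2) - 1 / (2 * τ)|
          ≤ |z i ^ 2 / (4 * τ ^ 2)| + |1 / (2 * τ)| := abs_sub _ _
        _ = z i ^ 2 / (4 * τ ^ 2) + 1 / (2 * τ) := by
            rw [_root_.abs_of_nonneg (by positivity), _root_.abs_of_nonneg (by positivity)]
        _ ≤ q / (4 * τ ^ 2) + 1 / (2 * τ) := by gcongr
    refine heq.trans ?_
    have expand : (q / (4 * τ ^ 2) + 1 / (2 * τ)) * heatKernel n τ z
        = (1 / (4 * τ ^ 2)) * (q * heatKernel n τ z) + (1 / (2 * τ)) * heatKernel n τ z := by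
      ring
    rw [expand]
    calc (1 / (4 * τ ^ 2)) * (q * heatKernel n τ z) + (1 / (2 * τ)) * heatKernel n τ z
        ≤ (1 / (4 * τ ^ 2)) * (C * (8 * τ) * rexp (-(1 / (8 * τ)) * q))
          + (1 / (2 * τ)) * (C * rexp (-(1 / (8 * τ)) * q)) := by
          gcongr
      _ = C * (8 * τ / (4 * τ ^ 2) + 1 / (2 * τ)) * rexp (-(1 / (8 * τ)) * q) := by
          field_simp
      _ ≤ _ := by
          apply mul_le_mul_of_nonneg_right _ hexp_pos
          apply mul_le_mul_of_nonneg_left _ hCpos.le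
          have h9 : (0:ℝ) ≤ 1 + (1 + 8 * τ) / (2 * τ) := by positivity
          linarith

lemma kernel_bound_time {τ : ℝ} (hτ : 0 < τ) :
    ∃ K : ℝ, 0 ≤ K ∧ ∀ σ : ℝ, τ / 2 < σ → σ < 3 * τ / 2 → ∀ z : Fin n → ℝ,
      heatKernel n σ z ≤ K * rexp (-(1 / (12 * τ)) * sqNorm z) ∧
      |DG n σ z| ≤ K * rexp (-(1 / (12 * τ)) * sqNorm z) := by
  set A : ℝ := (2 * π * τ) ^ (-(n : ℝ) / 2) with hA
  have hApos : 0 < A := by rw [hA]; positivity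
  refine ⟨A * (1 + 12 / τ + n / τ), by positivity, fun σ hσ1 hσ2 z => ?_⟩
  have hσ0 : 0 < σ := lt_trans (by positivity) hσ1
  set q := sqNorm z with hq
  have hq0 : 0 ≤ q := sqNorm_nonneg z
  have hexp_pos : (0:ℝ) ≤ rexp (-(1 / (12 * τ)) * q) := (Real.exp_pos _).le
  have hbase : (4 * π * σ) ^ (-(n : ℝ) / 2) ≤ A := by
    apply Real.rpow_le_rpow_of_nonpos (by positivity)
    · nlinarith [Real.pi_pos]
    · have : (0:ℝ) ≤ (n:ℝ) := Nat.cast_nonneg n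
      linarith
  have hexp1 : rexp (-q / (4 * σ)) ≤ rexp (-(1 / (6 * τ)) * q) := by
    apply Real.exp_le_exp.2
    have h1 : q / (6 * τ) ≤ q / (4 * σ) := by
      rw [div_le_div_iff₀ (by positivity) (by positivity)]
      nlinarith
    have e1 : -q / (4 * σ) = -(q / (4 * σ)) := by ring
    have e2 : -(1 / (6 * τ)) * q = -(q / (6 * τ)) := by ring
    rw [e1, e2]
    exact neg_le_neg h1
  have hexp2 : rexp (-(1 / (6 * τ)) * q) ≤ rexp (-(1 / (12 * τ)) * q) := by
    apply Real.exp_le_exp.2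
    have h1 : q / (12 * τ) ≤ q / (6 * τ) := by
      rw [div_le_div_iff₀ (by positivity) (by positivity)]
      nlinarith
    have e1 : -(1 / (6 * τ)) * q = -(q / (6 * τ)) := by ring
    have e2 : -(1 / (12 * τ)) * q = -(q / (12 * τ)) := by ring
    rw [e1, e2]
    exact neg_le_neg h1
  have hGbd : heatKernel n σ z ≤ A * rexp (-(1 / (6 * τ)) * q) := by
    unfold heatKernel
    rw [← hq]
    have h0 : (0:ℝ) ≤ rexp (-q / (4 * σ)) := (Real.exp_pos _).le
    calc (4 * π * σ) ^ (-(n : ℝ) / 2) * rexp (-q / (4 * σ))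
        ≤ A * rexp (-q / (4 * σ)) := mul_le_mul_of_nonneg_right hbase h0
      _ ≤ A * rexp (-(1 / (6 * τ)) * q) := mul_le_mul_of_nonneg_left hexp1 hApos.le
  have hGpos : 0 ≤ heatKernel n σ z := heatKernel_nonneg hσ0 z
  have hqexp : q * rexp (-(1 / (6 * τ)) * q) ≤ 12 * τ * rexp (-(1 / (12 * τ)) * q) := by
    have := qexp (c := 1 / (6 * τ)) (by positivity) hq0
    calc q * rexp (-(1 / (6 * τ)) * q) ≤ (2 / (1 / (6 * τ))) * rexp (-(1 / (6 * τ) / 2) * q) :=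
          this
      _ = 12 * τ * rexp (-(1 / (12 * τ)) * q) := by
          have e1 : (2 : ℝ) / (1 / (6 * τ)) = 12 * τ := by field_simp; ring
          have e2 : -(1 / (6 * τ) / 2) * q = -(1 / (12 * τ)) * q := by ring
          rw [e1, e2]
  have hGqbd : q * heatKernel n σ z ≤ A * (12 * τ) * rexp (-(1 / (12 * τ)) * q) := by
    calc q * heatKernel n σ z ≤ q * (A * rexp (-(1 / (6 * τ)) * q)) :=
          mul_le_mul_of_nonneg_left hGbd hq0
      _ = A * (q * rexp (-(1 / (6 * τ)) * q)) := by ring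
      _ ≤ A * (12 * τ * rexp (-(1 / (12 * τ)) * q)) := mul_le_mul_of_nonneg_left hqexp hApos.le
      _ = A * (12 * τ) * rexp (-(1 / (12 * τ)) * q) := by ring
  constructor
  · calc heatKernel n σ z ≤ A * rexp (-(1 / (6 * τ)) * q) := hGbd
      _ ≤ A * rexp (-(1 / (12 * τ)) * q) := mul_le_mul_of_nonneg_left hexp2 hApos.le
      _ ≤ _ := by
          apply mul_le_mul_of_nonneg_right _ hexp_pos
          have t1 : (0:ℝ) ≤ 12 / τ := by positivity
          have t2 : (0:ℝ) ≤ (n:ℝ) / τ := by positivity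
          nlinarith
  · have habs : |DG n σ z| ≤ (q / (4 * σ ^ 2) + (n : ℝ) / (2 * σ)) * heatKernel n σ z := by
      unfold DG
      rw [abs_mul, _root_.abs_of_nonneg hGpos, ← hq]
      apply mul_le_mul_of_nonneg_right _ hGpos
      calc |q / (4 * σ ^ 2) - (n : ℝ) / (2 * σ)|
          ≤ |q / (4 * σ ^ 2)| + |(n : ℝ) / (2 * σ)| := abs_sub _ _
        _ = q / (4 * σ ^ 2) + (n : ℝ) / (2 * σ) := by
            rw [_root_.abs_of_nonneg (by positivity), _root_.abs_of_nonneg (by positivity)]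
    refine habs.trans ?_
    have hcoef1 : q / (4 * σ ^ 2) ≤ q / τ ^ 2 := by
      rcases eq_or_lt_of_le hq0 with h | h
      · rw [← h]; simp
      · rw [div_le_div_iff₀ (by positivity) (by positivity)]
        nlinarith [mul_nonneg hq0 (mul_nonneg (by linarith : (0:ℝ) ≤ 2 * σ - τ)
          (by linarith : (0:ℝ) ≤ 2 * σ + τ))]
    have hcoef2 : (n : ℝ) / (2 * σ) ≤ (n : ℝ) / τ := by
      rw [div_le_div_iff₀ (by positivity) (by positivity)]
      have : (0:ℝ) ≤ (n:ℝ) := Nat.cast_nonneg n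
      nlinarith
    calc (q / (4 * σ ^ 2) + (n : ℝ) / (2 * σ)) * heatKernel n σ z
        ≤ (q / τ ^ 2 + (n : ℝ) / τ) * heatKernel n σ z := by
          apply mul_le_mul_of_nonneg_right _ hGpos
          linarith
      _ = (1 / τ ^ 2) * (q * heatKernel n σ z) + ((n : ℝ) / τ) * heatKernel n σ z := by ring
      _ ≤ (1 / τ ^ 2) * (A * (12 * τ) * rexp (-(1 / (12 * τ)) * q))
          + ((n : ℝ) / τ) * (A * rexp (-(1 / (12 * τ)) * q)) := by
          have hG12 : heatKernel n σ z ≤ A * rexp (-(1 / (12 * τ)) * q) :=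
            hGbd.trans (mul_le_mul_of_nonneg_left hexp2 hApos.le)
          have t1 : (0:ℝ) ≤ 1 / τ ^ 2 := by positivity
          have t2 : (0:ℝ) ≤ (n:ℝ) / τ := by positivity
          have := mul_le_mul_of_nonneg_left hGqbd t1
          have := mul_le_mul_of_nonneg_left hG12 t2
          linarith
      _ = A * (12 / τ + (n:ℝ) / τ) * rexp (-(1 / (12 * τ)) * q) := by
          field_simp
      _ ≤ _ := by
          apply mul_le_mul_of_nonneg_right _ hexp_pos
          nlinarith

lemma shift_exp {τ : ℝ} (hτ : 0 < τ) (x z : Fin n → ℝ) (i : Fin n) {r : ℝ} (hr : |r| ≤ 1) :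
    rexp (-(1 / (8 * τ)) * sqNorm (x + r • (Pi.single i 1 : Fin n → ℝ) - z))
      ≤ rexp (1 / (8 * τ)) * rexp (-(1 / (16 * τ)) * sqNorm (x - z)) := by
  set e : Fin n → ℝ := Pi.single i 1 with he
  set S := sqNorm (x + r • e - z) with hS
  rw [← Real.exp_add]
  apply Real.exp_le_exp.2
  have h1 : sqNorm (x - z) ≤ 2 * S + 2 * r ^ 2 := by
    have h := sqNorm_sub_le (x + r • e - z) (r • e)
    rw [sqNorm_smul_single] at h
    have heq : x + r • e - z - r • e = x - z := by abel
    rwa [heq] at h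
  have hr2 : r ^ 2 ≤ 1 := by nlinarith [_root_.sq_abs r, abs_nonneg r]
  have h16 : (0:ℝ) < 16 * τ := by positivity
  rw [← mul_le_mul_iff_left₀ h16]
  have e1 : -(1 / (8 * τ)) * S * (16 * τ) = -2 * S := by field_simp; ring
  have e2 : (1 / (8 * τ) + -(1 / (16 * τ)) * sqNorm (x - z)) * (16 * τ)
      = 2 - sqNorm (x - z) := by field_simp; ring
  rw [e1, e2]
  linarith

lemma schwartz_sup_bound (w : SchwartzMap ((Fin n → ℝ) × ℝ) ℂ) :
    ∃ M : ℝ, 0 ≤ M ∧ ∀ q, ‖w q‖ ≤ M :=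
  ⟨SchwartzMap.seminorm ℝ 0 0 w, apply_nonneg _ _, fun q => SchwartzMap.norm_le_seminorm ℝ w q⟩

def SchwartzMap.pderivCLM (𝕜 : Type*) [RCLike 𝕜] {E F : Type*} [NormedAddCommGroup E]
    [NormedSpace ℝ E] [NormedAddCommGroup F] [NormedSpace ℝ F] [NormedSpace 𝕜 F]
    [SMulCommClass ℝ 𝕜 F] (m : E) : SchwartzMap E F →L[𝕜] SchwartzMap E F :=
  (SchwartzMap.evalCLM 𝕜 E F m).comp (SchwartzMap.fderivCLM 𝕜 E F)

lemma SchwartzMap.pderivCLM_apply (𝕜 : Type*) [RCLike 𝕜] {E F : Type*} [NormedAddCommGroup E]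
    [NormedSpace ℝ E] [NormedAddCommGroup F] [NormedSpace ℝ F] [NormedSpace 𝕜 F]
    [SMulCommClass ℝ 𝕜 F] (m : E) (f : SchwartzMap E F) (x : E) :
    SchwartzMap.pderivCLM 𝕜 m f x = fderiv ℝ f x m := rfl

lemma ibp {τ : ℝ} (hτ : 0 < τ) (i : Fin n) (x : Fin n → ℝ) (s : ℝ)
    (g g' : (Fin n → ℝ) → ℝ)
    (hgc : Continuous g) (hg'c : Continuous g')
    (hder : ∀ (z : Fin n → ℝ) (r : ℝ),
      HasDerivAt (fun ρ : ℝ => g (z + ρ • (Pi.single i 1 : Fin n → ℝ)))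
        (g' (z + r • (Pi.single i 1 : Fin n → ℝ))) r)
    {K : ℝ} (hK : 0 ≤ K)
    (hb : ∀ z, |g z| ≤ K * rexp (-(1 / (8 * τ)) * sqNorm z))
    (hb' : ∀ z, |g' z| ≤ K * rexp (-(1 / (8 * τ)) * sqNorm z))
    (w : SchwartzMap ((Fin n → ℝ) × ℝ) ℂ) :
    ∫ y : Fin n → ℝ, (g' (x - y) : ℂ) * w (y, s)
      = ∫ y : Fin n → ℝ, (g (x - y) : ℂ)
          * (SchwartzMap.pderivCLM ℝ (((Pi.single i 1 : Fin n → ℝ), 0)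
              : (Fin n → ℝ) × ℝ) w) (y, s) := by
  set e : Fin n → ℝ := Pi.single i 1 with he
  set Dw := SchwartzMap.pderivCLM ℝ ((e, 0) : (Fin n → ℝ) × ℝ) w with hDw
  obtain ⟨M, hM0, hM⟩ := schwartz_sup_bound w
  obtain ⟨M', hM'0, hM'⟩ := schwartz_sup_bound Dw
  have hcont_w : ∀ t : ℝ, Continuous (fun y : Fin n → ℝ => w (y, t)) := fun t =>
    w.continuous.comp (continuous_id.prodMk continuous_const)
  have hcont_Dw : ∀ t : ℝ, Continuous (fun y : Fin n → ℝ => Dw (y, t)) := fun t =>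
    Dw.continuous.comp (continuous_id.prodMk continuous_const)
  -- the two parametrized integrals
  have hΦΨ : ∀ r : ℝ, (∫ y : Fin n → ℝ, (g (x + r • e - y) : ℂ) * w (y, s))
      = ∫ ζ : Fin n → ℝ, (g ζ : ℂ) * w (x + r • e - ζ, s) := by
    intro r
    rw [← integral_sub_left_eq_self (fun ζ : Fin n → ℝ => (g ζ : ℂ) * w (x + r • e - ζ, s))
      volume (x + r • e)]
    congr 1
    funext y
    rw [sub_sub_cancel]
  -- derivative of Φ at 0
  have dΦ : HasDerivAt (fun r : ℝ => ∫ y : Fin n → ℝ, (g (x + r • e - y) : ℂ) * w (y, s))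
      (∫ y : Fin n → ℝ, (g' (x - y) : ℂ) * w (y, s)) 0 := by
    have key := hasDerivAt_integral_of_dominated_loc_of_deriv_le
      (F := fun (r : ℝ) (y : Fin n → ℝ) => (g (x + r • e - y) : ℂ) * w (y, s))
      (F' := fun (r : ℝ) (y : Fin n → ℝ) => (g' (x + r • e - y) : ℂ) * w (y, s))
      (x₀ := (0:ℝ)) (s := Metric.ball 0 1) (μ := volume)
      (bound := fun y : Fin n → ℝ => K * M * rexp (1 / (8 * τ)) * rexp (-(1 / (16 * τ)) * sqNorm (x - y)))
      (Metric.ball_mem_nhds _ one_pos)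
      (Filter.Eventually.of_forall fun r =>
        (((Complex.continuous_ofReal.comp (hgc.comp
          (continuous_const.sub continuous_id))).mul (hcont_w s)).aestronglyMeasurable))
      ?_ ?_ ?_ ?_ ?_
    · have h0 : ∀ y : Fin n → ℝ, (g' (x + (0:ℝ) • e - y) : ℂ) * w (y, s)
          = (g' (x - y) : ℂ) * w (y, s) := by
        intro y; rw [zero_smul, add_zero]
      have := key.2
      simpa only [h0] using this
    · -- integrability at r = 0
      apply Integrable.mono'
        ((integrable_gauss_sub (by positivity : (0:ℝ) < 1/(8*τ)) x).const_mul (K * M))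
      · exact (((Complex.continuous_ofReal.comp (hgc.comp
          (continuous_const.sub continuous_id))).mul (hcont_w s)).aestronglyMeasurable)
      · apply Filter.Eventually.of_forall
        intro y
        simp only [zero_smul, add_zero, norm_mul, Complex.norm_real, Real.norm_eq_abs]
        calc |g (x - y)| * ‖w (y, s)‖
            ≤ (K * rexp (-(1 / (8 * τ)) * sqNorm (x - y))) * M := by
              apply mul_le_mul (hb _) (hM _) (norm_nonneg _)
              positivity
          _ = K * M * rexp (-(1 / (8 * τ)) * sqNorm (x - y)) := by ring
    · exact (((Complex.continuous_ofReal.comp (hg'c.comp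
        (continuous_const.sub continuous_id))).mul (hcont_w s)).aestronglyMeasurable)
    · -- bound for the derivative
      apply Filter.Eventually.of_forall
      intro y r hr
      simp only [norm_mul, Complex.norm_real, Real.norm_eq_abs]
      have hr1 : |r| ≤ 1 := by
        rw [Metric.mem_ball, Real.dist_eq, sub_zero] at hr
        exact hr.le
      calc |g' (x + r • e - y)| * ‖w (y, s)‖
          ≤ (K * rexp (-(1 / (8 * τ)) * sqNorm (x + r • e - y))) * M := by
            apply mul_le_mul (hb' _) (hM _) (norm_nonneg _)
            positivity
        _ ≤ (K * (rexp (1 / (8 * τ)) * rexp (-(1 / (16 * τ)) * sqNorm (x - y)))) * M := by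
            apply mul_le_mul_of_nonneg_right _ hM0
            exact mul_le_mul_of_nonneg_left (shift_exp hτ x y i hr1) hK
        _ = K * M * rexp (1 / (8 * τ)) * rexp (-(1 / (16 * τ)) * sqNorm (x - y)) := by ring
    · exact ((integrable_gauss_sub (by positivity : (0:ℝ) < 1/(16*τ)) x).const_mul
        (K * M * rexp (1 / (8 * τ))))
    · apply Filter.Eventually.of_forall
      intro y r _
      have h := ((hder (x - y) r).ofReal_comp).mul_const (w (y, s))
      have hfun : (fun ρ : ℝ => ((g (x - y + ρ • e) : ℝ) : ℂ) * w (y, s))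
          = fun ρ : ℝ => ((g (x + ρ • e - y) : ℝ) : ℂ) * w (y, s) := by
        funext ρ
        rw [add_sub_right_comm]
      have hval : g' (x - y + r • e) = g' (x + r • e - y) := by rw [add_sub_right_comm]
      rw [hfun, hval] at h
      exact h
  -- derivative of Ψ at 0
  have dΨ : HasDerivAt (fun r : ℝ => ∫ ζ : Fin n → ℝ, (g ζ : ℂ) * w (x + r • e - ζ, s))
      (∫ ζ : Fin n → ℝ, (g ζ : ℂ) * Dw (x - ζ, s)) 0 := by
    have hgK : ∀ ζ : Fin n → ℝ, |g ζ| ≤ K * rexp (-(1 / (8 * τ)) * sqNorm ζ) := hb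
    have hgint : Integrable (fun ζ : Fin n → ℝ => g ζ) := by
      apply Integrable.mono' ((integrable_gauss (by positivity : (0:ℝ) < 1/(8*τ))).const_mul K)
        hgc.aestronglyMeasurable
      exact Filter.Eventually.of_forall fun ζ => by
        rw [Real.norm_eq_abs]; exact hgK ζ
    have key := hasDerivAt_integral_of_dominated_loc_of_deriv_le
      (F := fun (r : ℝ) (ζ : Fin n → ℝ) => (g ζ : ℂ) * w (x + r • e - ζ, s))
      (F' := fun (r : ℝ) (ζ : Fin n → ℝ) => (g ζ : ℂ) * Dw (x + r • e - ζ, s))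
      (x₀ := (0:ℝ)) (s := Metric.ball 0 1) (μ := volume)
      (bound := fun ζ : Fin n → ℝ => K * M' * rexp (-(1 / (8 * τ)) * sqNorm ζ))
      (Metric.ball_mem_nhds _ one_pos)
      (Filter.Eventually.of_forall fun r =>
        ((Complex.continuous_ofReal.comp hgc).mul
          (w.continuous.comp ((continuous_const.sub continuous_id).prodMk
            continuous_const))).aestronglyMeasurable)
      ?_ ?_ ?_ ?_ ?_
    · have h0 : ∀ ζ : Fin n → ℝ, (g ζ : ℂ) * Dw (x + (0:ℝ) • e - ζ, s)
          = (g ζ : ℂ) * Dw (x - ζ, s) := by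
        intro ζ; rw [zero_smul, add_zero]
      have := key.2
      simpa only [h0] using this
    · apply Integrable.mono' ((integrable_gauss (by positivity : (0:ℝ) < 1/(8*τ))).const_mul (K * M))
      · exact ((Complex.continuous_ofReal.comp hgc).mul
          (w.continuous.comp ((continuous_const.sub continuous_id).prodMk
            continuous_const))).aestronglyMeasurable
      · apply Filter.Eventually.of_forall
        intro ζ
        simp only [norm_mul, Complex.norm_real, Real.norm_eq_abs]
        calc |g ζ| * ‖w (x + (0:ℝ) • e - ζ, s)‖
            ≤ (K * rexp (-(1 / (8 * τ)) * sqNorm ζ)) * M := by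
              apply mul_le_mul (hgK _) (hM _) (norm_nonneg _)
              positivity
          _ = K * M * rexp (-(1 / (8 * τ)) * sqNorm ζ) := by ring
    · exact ((Complex.continuous_ofReal.comp hgc).mul
        (Dw.continuous.comp ((continuous_const.sub continuous_id).prodMk
          continuous_const))).aestronglyMeasurable
    · apply Filter.Eventually.of_forall
      intro ζ r _
      simp only [norm_mul, Complex.norm_real, Real.norm_eq_abs]
      calc |g ζ| * ‖Dw (x + r • e - ζ, s)‖
          ≤ (K * rexp (-(1 / (8 * τ)) * sqNorm ζ)) * M' := by
            apply mul_le_mul (hgK _) (hM' _) (norm_nonneg _)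
            positivity
        _ = K * M' * rexp (-(1 / (8 * τ)) * sqNorm ζ) := by ring
    · exact ((integrable_gauss (by positivity : (0:ℝ) < 1/(8*τ))).const_mul (K * M'))
    · apply Filter.Eventually.of_forall
      intro ζ r _
      have hpath : HasDerivAt (fun ρ : ℝ => ((x + ρ • e - ζ : Fin n → ℝ), s))
          ((e, 0) : (Fin n → ℝ) × ℝ) r := by
        apply HasDerivAt.prodMk
        · have h1 : HasDerivAt (fun ρ : ℝ => ρ • e) ((1:ℝ) • e) r :=
            (hasDerivAt_id r).smul_const e
          rw [one_smul] at h1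
          exact (h1.const_add x).sub_const ζ
        · exact hasDerivAt_const r s
      have hw := (w.differentiableAt.hasFDerivAt).comp_hasDerivAt r hpath
      have := hw.const_mul ((g ζ : ℝ) : ℂ)
      exact this
  -- combine
  have h0 : (∫ y : Fin n → ℝ, (g' (x - y) : ℂ) * w (y, s))
      = ∫ ζ : Fin n → ℝ, (g ζ : ℂ) * Dw (x - ζ, s) := by
    have e1 := dΦ.deriv
    have e2 := dΨ.deriv
    have e3 : (fun r : ℝ => ∫ y : Fin n → ℝ, (g (x + r • e - y) : ℂ) * w (y, s))
        = fun r : ℝ => ∫ ζ : Fin n → ℝ, (g ζ : ℂ) * w (x + r • e - ζ, s) := funext hΦΨ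
    rw [← e1, e3, e2]
  rw [h0, ← integral_sub_left_eq_self (fun ζ : Fin n → ℝ => (g ζ : ℂ) * Dw (x - ζ, s)) volume x]
  congr 1
  funext y
  rw [sub_sub_cancel]

def Hs (n : ℕ) (v : SchwartzMap (SpaceTime n) ℂ) : SchwartzMap (SpaceTime n) ℂ :=
  SchwartzMap.pderivCLM ℝ (eTime n) v
    - ∑ i : Fin n, SchwartzMap.pderivCLM ℝ (eSpace n i) (SchwartzMap.pderivCLM ℝ (eSpace n i) v)

lemma Hs_apply (v : SchwartzMap (SpaceTime n) ℂ) (q : SpaceTime n) :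
    Hs n v q = SchwartzMap.pderivCLM ℝ (eTime n) v q
      - ∑ i : Fin n, SchwartzMap.pderivCLM ℝ (eSpace n i)
          (SchwartzMap.pderivCLM ℝ (eSpace n i) v) q := by
  unfold Hs
  rw [SchwartzMap.sub_apply]
  congr 1
  induction (Finset.univ : Finset (Fin n)) using Finset.induction with
  | empty => simp
  | insert _ _ hx ih =>
      rw [Finset.sum_insert hx, Finset.sum_insert hx, SchwartzMap.add_apply, ih]

lemma hasDerivAt_heatSemigroup (v : SchwartzMap (SpaceTime n) ℂ) (p : SpaceTime n)
    {τ : ℝ} (hτ : 0 < τ) :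
    HasDerivAt (fun σ : ℝ => heatSemigroup n σ (⇑v) p)
      ((∫ y : Fin n → ℝ, (DG n τ (p.1 - y) : ℂ) * v (y, p.2 - τ))
        - ∫ y : Fin n → ℝ, (heatKernel n τ (p.1 - y) : ℂ)
            * (SchwartzMap.pderivCLM ℝ (eTime n) v) (y, p.2 - τ)) τ := by
  obtain ⟨x, t⟩ := p
  set Tv := SchwartzMap.pderivCLM ℝ (eTime n) v with hTv
  obtain ⟨M, hM0, hM⟩ := schwartz_sup_bound v
  obtain ⟨M', hM'0, hM'⟩ := schwartz_sup_bound Tv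
  obtain ⟨K, hK0, hK⟩ := kernel_bound_time (n := n) hτ
  have hττ : τ / 2 < τ ∧ τ < 3 * τ / 2 := ⟨by linarith, by linarith⟩
  have hball : ∀ σ : ℝ, σ ∈ Metric.ball τ (τ / 2) → τ / 2 < σ ∧ σ < 3 * τ / 2 := by
    intro σ hσ
    rw [Metric.mem_ball, Real.dist_eq, abs_lt] at hσ
    constructor <;> linarith [hσ.1, hσ.2]
  have hcont : ∀ σ : ℝ, Continuous fun y : Fin n → ℝ =>
      (heatKernel n σ (x - y) : ℂ) * v (y, t - σ) := by
    intro σ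
    exact (Complex.continuous_ofReal.comp ((continuous_heatKernel σ).comp
      (continuous_const.sub continuous_id))).mul
      (v.continuous.comp (continuous_id.prodMk continuous_const))
  have key := hasDerivAt_integral_of_dominated_loc_of_deriv_le
    (F := fun (σ : ℝ) (y : Fin n → ℝ) => (heatKernel n σ (x - y) : ℂ) * v (y, t - σ))
    (F' := fun (σ : ℝ) (y : Fin n → ℝ) =>
      (DG n σ (x - y) : ℂ) * v (y, t - σ) + (heatKernel n σ (x - y) : ℂ) * (-(Tv (y, t - σ))))
    (x₀ := τ) (s := Metric.ball τ (τ / 2)) (μ := volume)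
    (bound := fun y : Fin n → ℝ => (K * M + K * M') * rexp (-(1 / (12 * τ)) * sqNorm (x - y)))
    (Metric.ball_mem_nhds _ (by positivity))
    (Filter.Eventually.of_forall fun σ => (hcont σ).aestronglyMeasurable)
    ?_ ?_ ?_ ?_ ?_
  · -- conclusion
    have h2 := key.2
    have hint1 : Integrable (fun y : Fin n → ℝ => (DG n τ (x - y) : ℂ) * v (y, t - τ)) := by
      apply Integrable.mono'
        ((integrable_gauss_sub (by positivity : (0:ℝ) < 1/(12*τ)) x).const_mul (K * M))
      · exact ((Complex.continuous_ofReal.comp ((continuous_DG τ).comp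
          (continuous_const.sub continuous_id))).mul
          (v.continuous.comp (continuous_id.prodMk continuous_const))).aestronglyMeasurable
      · apply Filter.Eventually.of_forall
        intro y
        simp only [norm_mul, Complex.norm_real, Real.norm_eq_abs]
        calc |DG n τ (x - y)| * ‖v (y, t - τ)‖
            ≤ (K * rexp (-(1 / (12 * τ)) * sqNorm (x - y))) * M := by
              apply mul_le_mul ((hK τ hττ.1 hττ.2 (x - y)).2) (hM _) (norm_nonneg _)
              positivity
          _ = K * M * rexp (-(1 / (12 * τ)) * sqNorm (x - y)) := by ring
    have hint2 : Integrable (fun y : Fin n → ℝ =>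
        (heatKernel n τ (x - y) : ℂ) * (-(Tv (y, t - τ)))) := by
      apply Integrable.mono'
        ((integrable_gauss_sub (by positivity : (0:ℝ) < 1/(12*τ)) x).const_mul (K * M'))
      · exact ((Complex.continuous_ofReal.comp ((continuous_heatKernel τ).comp
          (continuous_const.sub continuous_id))).mul
          ((Tv.continuous.comp (continuous_id.prodMk continuous_const)).neg)).aestronglyMeasurable
      · apply Filter.Eventually.of_forall
        intro y
        simp only [norm_mul, Complex.norm_real, Real.norm_eq_abs, norm_neg]
        have hG := (hK τ hττ.1 hττ.2 (x - y)).1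
        have hGpos : 0 ≤ heatKernel n τ (x - y) := heatKernel_nonneg hτ _
        calc |heatKernel n τ (x - y)| * ‖Tv (y, t - τ)‖
            ≤ (K * rexp (-(1 / (12 * τ)) * sqNorm (x - y))) * M' := by
              apply mul_le_mul _ (hM' _) (norm_nonneg _) (by positivity)
              rwa [_root_.abs_of_nonneg hGpos]
          _ = K * M' * rexp (-(1 / (12 * τ)) * sqNorm (x - y)) := by ring
    have heq : (∫ y : Fin n → ℝ, ((DG n τ (x - y) : ℂ) * v (y, t - τ)
        + (heatKernel n τ (x - y) : ℂ) * (-(Tv (y, t - τ)))))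
        = (∫ y : Fin n → ℝ, (DG n τ (x - y) : ℂ) * v (y, t - τ))
          - ∫ y : Fin n → ℝ, (heatKernel n τ (x - y) : ℂ) * Tv (y, t - τ) := by
      have hneg : (∫ y : Fin n → ℝ, (heatKernel n τ (x - y) : ℂ) * (-(Tv (y, t - τ))))
          = -∫ y : Fin n → ℝ, (heatKernel n τ (x - y) : ℂ) * Tv (y, t - τ) := by
        rw [← integral_neg]
        congr 1
        funext y
        ring
      rw [integral_add hint1 hint2, hneg]
      exact (sub_eq_add_neg _ _).symm
    rw [heq] at h2
    exact h2
  · -- integrable at τ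
    apply Integrable.mono'
      ((integrable_gauss_sub (by positivity : (0:ℝ) < 1/(12*τ)) x).const_mul (K * M))
    · exact (hcont τ).aestronglyMeasurable
    · apply Filter.Eventually.of_forall
      intro y
      simp only [norm_mul, Complex.norm_real, Real.norm_eq_abs]
      have hG := (hK τ hττ.1 hττ.2 (x - y)).1
      have hGpos : 0 ≤ heatKernel n τ (x - y) := heatKernel_nonneg hτ _
      calc |heatKernel n τ (x - y)| * ‖v (y, t - τ)‖
          ≤ (K * rexp (-(1 / (12 * τ)) * sqNorm (x - y))) * M := by
            apply mul_le_mul _ (hM _) (norm_nonneg _) (by positivity)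
            rwa [_root_.abs_of_nonneg hGpos]
        _ = K * M * rexp (-(1 / (12 * τ)) * sqNorm (x - y)) := by ring
  · -- F' τ measurable
    exact (((Complex.continuous_ofReal.comp ((continuous_DG τ).comp
      (continuous_const.sub continuous_id))).mul
      (v.continuous.comp (continuous_id.prodMk continuous_const))).add
      ((Complex.continuous_ofReal.comp ((continuous_heatKernel τ).comp
        (continuous_const.sub continuous_id))).mul
        ((Tv.continuous.comp (continuous_id.prodMk continuous_const)).neg))).aestronglyMeasurable
  · -- bound
    apply Filter.Eventually.of_forall
    intro y σ hσ
    obtain ⟨hσ1, hσ2⟩ := hball σ hσ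
    have hσ0 : 0 < σ := lt_trans (by positivity) hσ1
    have hG := (hK σ hσ1 hσ2 (x - y)).1
    have hDGb := (hK σ hσ1 hσ2 (x - y)).2
    have hGpos : 0 ≤ heatKernel n σ (x - y) := heatKernel_nonneg hσ0 _
    calc ‖(DG n σ (x - y) : ℂ) * v (y, t - σ)
          + (heatKernel n σ (x - y) : ℂ) * (-(Tv (y, t - σ)))‖
        ≤ ‖(DG n σ (x - y) : ℂ) * v (y, t - σ)‖
          + ‖(heatKernel n σ (x - y) : ℂ) * (-(Tv (y, t - σ)))‖ := norm_add_le _ _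
      _ ≤ (K * rexp (-(1 / (12 * τ)) * sqNorm (x - y))) * M
          + (K * rexp (-(1 / (12 * τ)) * sqNorm (x - y))) * M' := by
          apply add_le_add
          · simp only [norm_mul, Complex.norm_real, Real.norm_eq_abs]
            apply mul_le_mul hDGb (hM _) (norm_nonneg _) (by positivity)
          · simp only [norm_mul, Complex.norm_real, Real.norm_eq_abs, norm_neg]
            apply mul_le_mul _ (hM' _) (norm_nonneg _) (by positivity)
            rwa [_root_.abs_of_nonneg hGpos]
      _ = (K * M + K * M') * rexp (-(1 / (12 * τ)) * sqNorm (x - y)) := by ring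
  · exact ((integrable_gauss_sub (by positivity : (0:ℝ) < 1/(12*τ)) x).const_mul (K * M + K * M'))
  · -- pointwise differentiability
    apply Filter.Eventually.of_forall
    intro y σ hσ
    obtain ⟨hσ1, hσ2⟩ := hball σ hσ
    have hσ0 : 0 < σ := lt_trans (by positivity) hσ1
    have h1 : HasDerivAt (fun σ' : ℝ => ((heatKernel n σ' (x - y) : ℝ) : ℂ))
        ((DG n σ (x - y) : ℂ)) σ := (hasDerivAt_heatKernel_time hσ0 (x - y)).ofReal_comp
    have hpath : HasDerivAt (fun σ' : ℝ => ((y : Fin n → ℝ), t - σ'))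
        (((0 : Fin n → ℝ), (-1 : ℝ)) : SpaceTime n) σ :=
      (hasDerivAt_const σ y).prodMk ((hasDerivAt_id σ).const_sub t)
    have h2 : HasDerivAt (fun σ' : ℝ => v (y, t - σ')) (-(Tv (y, t - σ))) σ := by
      have hw := (v.differentiableAt.hasFDerivAt).comp_hasDerivAt σ hpath
      have hneg : ((0 : Fin n → ℝ), (-1 : ℝ)) = -(eTime n) := by
        unfold eTime
        rw [Prod.neg_mk, neg_zero]
      rw [hneg, ContinuousLinearMap.map_neg] at hw
      rw [hTv, SchwartzMap.pderivCLM_apply]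
      exact hw
    exact h1.mul h2

lemma integrable_kernel_mul {K c : ℝ} (hc : 0 < c) (hK : 0 ≤ K)
    (g : (Fin n → ℝ) → ℝ) (hgc : Continuous g)
    (hb : ∀ z, |g z| ≤ K * rexp (-c * sqNorm z)) (x : Fin n → ℝ)
    (w : SchwartzMap (SpaceTime n) ℂ) (s : ℝ) :
    Integrable (fun y : Fin n → ℝ => (g (x - y) : ℂ) * w (y, s)) := by
  obtain ⟨M, hM0, hM⟩ := schwartz_sup_bound w
  apply Integrable.mono' ((integrable_gauss_sub hc x).const_mul (K * M))
  · exact ((Complex.continuous_ofReal.comp (hgc.comp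
      (continuous_const.sub continuous_id))).mul
      (w.continuous.comp (continuous_id.prodMk continuous_const))).aestronglyMeasurable
  · apply Filter.Eventually.of_forall
    intro y
    simp only [norm_mul, Complex.norm_real, Real.norm_eq_abs]
    calc |g (x - y)| * ‖w (y, s)‖
        ≤ (K * rexp (-c * sqNorm (x - y))) * M := by
          apply mul_le_mul (hb _) (hM _) (norm_nonneg _)
          positivity
      _ = K * M * rexp (-c * sqNorm (x - y)) := by ring

lemma DG_eq_sum {τ : ℝ} (z : Fin n → ℝ) : DG n τ z = ∑ i : Fin n, D2G n i τ z := by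
  unfold DG D2G
  rw [← Finset.sum_mul]
  congr 1
  rw [Finset.sum_sub_distrib]
  congr 1
  · rw [← Finset.sum_div]
    rfl
  · rw [Finset.sum_const, Finset.card_univ, Fintype.card_fin, nsmul_eq_mul]
    field_simp

lemma key_deriv (v : SchwartzMap (SpaceTime n) ℂ) (p : SpaceTime n) {τ : ℝ} (hτ : 0 < τ) :
    HasDerivAt (fun σ : ℝ => heatSemigroup n σ (⇑v) p) (-(heatSemigroup n τ (⇑(Hs n v)) p)) τ := by
  have h := hasDerivAt_heatSemigroup v p hτ
  convert h using 1
  set x := p.1 with hx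
  set s := p.2 - τ with hs
  obtain ⟨K, hK0, hKb⟩ := kernel_bound (n := n) hτ
  have h8 : (0:ℝ) < 1 / (8 * τ) := by positivity
  -- second derivatives of v in space directions
  set D2v : Fin n → SchwartzMap (SpaceTime n) ℂ := fun i =>
    SchwartzMap.pderivCLM ℝ (eSpace n i) (SchwartzMap.pderivCLM ℝ (eSpace n i) v) with hD2v
  have hstep : ∀ i : Fin n,
      (∫ y : Fin n → ℝ, (D2G n i τ (x - y) : ℂ) * v (y, s))
        = ∫ y : Fin n → ℝ, (heatKernel n τ (x - y) : ℂ) * (D2v i) (y, s) := by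
    intro i
    have e1 : (∫ y : Fin n → ℝ, (D2G n i τ (x - y) : ℂ) * v (y, s))
        = ∫ y : Fin n → ℝ, (D1G n i τ (x - y) : ℂ)
            * (SchwartzMap.pderivCLM ℝ (((Pi.single i 1 : Fin n → ℝ), 0)
                : (Fin n → ℝ) × ℝ) v) (y, s) :=
      ibp hτ i x s (D1G n i τ) (D2G n i τ) (continuous_D1G i τ) (continuous_D2G i τ)
        (fun z r => hasDerivAt_D1G_line hτ z i r) hK0
        (fun z => ((hKb z).2 i).1) (fun z => ((hKb z).2 i).2) v
    have e2 : (∫ y : Fin n → ℝ, (D1G n i τ (x - y) : ℂ)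
            * (SchwartzMap.pderivCLM ℝ (((Pi.single i 1 : Fin n → ℝ), 0)
                : (Fin n → ℝ) × ℝ) v) (y, s))
        = ∫ y : Fin n → ℝ, (heatKernel n τ (x - y) : ℂ)
            * (SchwartzMap.pderivCLM ℝ (((Pi.single i 1 : Fin n → ℝ), 0)
                : (Fin n → ℝ) × ℝ)
              (SchwartzMap.pderivCLM ℝ (((Pi.single i 1 : Fin n → ℝ), 0)
                : (Fin n → ℝ) × ℝ) v)) (y, s) :=
      ibp hτ i x s (heatKernel n τ) (D1G n i τ) (continuous_heatKernel τ) (continuous_D1G i τ)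
        (fun z r => hasDerivAt_heatKernel_line hτ z i r) hK0
        (fun z => (hKb z).1) (fun z => ((hKb z).2 i).1)
        (SchwartzMap.pderivCLM ℝ (((Pi.single i 1 : Fin n → ℝ), 0) : (Fin n → ℝ) × ℝ) v)
    rw [e1, e2]
    rfl
  -- sum over i of the DG decomposition
  have hsum1 : (∫ y : Fin n → ℝ, (DG n τ (x - y) : ℂ) * v (y, s))
      = ∑ i : Fin n, ∫ y : Fin n → ℝ, (D2G n i τ (x - y) : ℂ) * v (y, s) := by
    have efun : (fun y : Fin n → ℝ => (DG n τ (x - y) : ℂ) * v (y, s))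
        = fun y : Fin n → ℝ => ∑ i : Fin n, (D2G n i τ (x - y) : ℂ) * v (y, s) := by
      funext y
      rw [← Finset.sum_mul]
      congr 1
      rw [DG_eq_sum]
      push_cast
      rfl
    rw [efun]
    apply integral_finset_sum
    intro i _
    exact integrable_kernel_mul h8 hK0 (D2G n i τ) (continuous_D2G i τ)
      (fun z => ((hKb z).2 i).2) x v s
  have hsum2 : (∑ i : Fin n, ∫ y : Fin n → ℝ, (heatKernel n τ (x - y) : ℂ) * (D2v i) (y, s))
      = ∫ y : Fin n → ℝ, (heatKernel n τ (x - y) : ℂ) * (∑ i : Fin n, (D2v i) (y, s)) := by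
    rw [← integral_finset_sum]
    · congr 1
      funext y
      rw [Finset.mul_sum]
    · intro i _
      exact integrable_kernel_mul h8 hK0 (heatKernel n τ) (continuous_heatKernel τ)
        (fun z => (hKb z).1) x (D2v i) s
  -- the semigroup applied to Hs v
  have hHs : heatSemigroup n τ (⇑(Hs n v)) p
      = (∫ y : Fin n → ℝ, (heatKernel n τ (x - y) : ℂ)
          * (SchwartzMap.pderivCLM ℝ (eTime n) v) (y, s))
        - ∫ y : Fin n → ℝ, (heatKernel n τ (x - y) : ℂ) * (∑ i : Fin n, (D2v i) (y, s)) := by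
    have efun : (fun y : Fin n → ℝ => (heatKernel n τ (x - y) : ℂ) * (Hs n v) (y, s))
        = fun y : Fin n → ℝ => (heatKernel n τ (x - y) : ℂ)
            * (SchwartzMap.pderivCLM ℝ (eTime n) v) (y, s)
          - (heatKernel n τ (x - y) : ℂ) * (∑ i : Fin n, (D2v i) (y, s)) := by
      funext y
      rw [Hs_apply, mul_sub]
    have : heatSemigroup n τ (⇑(Hs n v)) p
        = ∫ y : Fin n → ℝ, (heatKernel n τ (x - y) : ℂ) * (Hs n v) (y, s) := rfl
    rw [this, efun]
    apply integral_sub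
    · exact integrable_kernel_mul h8 hK0 (heatKernel n τ) (continuous_heatKernel τ)
        (fun z => (hKb z).1) x (SchwartzMap.pderivCLM ℝ (eTime n) v) s
    · have : (fun y : Fin n → ℝ => (heatKernel n τ (x - y) : ℂ) * (∑ i : Fin n, (D2v i) (y, s)))
          = fun y : Fin n → ℝ => ∑ i : Fin n, (heatKernel n τ (x - y) : ℂ) * (D2v i) (y, s) := by
        funext y
        rw [Finset.mul_sum]
      rw [this]
      apply integrable_finset_sum
      intro i _
      exact integrable_kernel_mul h8 hK0 (heatKernel n τ) (continuous_heatKernel τ)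
        (fun z => (hKb z).1) x (D2v i) s
  rw [hHs]
  have hfinal : (∫ y : Fin n → ℝ, (DG n τ (x - y) : ℂ) * v (y, s))
      = ∫ y : Fin n → ℝ, (heatKernel n τ (x - y) : ℂ) * (∑ i : Fin n, (D2v i) (y, s)) := by
    rw [hsum1, ← hsum2]
    exact Finset.sum_congr rfl fun i _ => hstep i
  rw [← hfinal]
  ring

lemma heatOp_coe (v : SchwartzMap (SpaceTime n) ℂ) : heatOp n (⇑v) = ⇑(Hs n v) := by
  funext q
  rw [Hs_apply]
  unfold heatOp pderivDir
  have h1 : fderiv ℝ (⇑v) q (eTime n) = SchwartzMap.pderivCLM ℝ (eTime n) v q :=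
    (SchwartzMap.pderivCLM_apply ℝ (eTime n) v q).symm
  have h2 : ∀ i : Fin n,
      fderiv ℝ (fun p : SpaceTime n => fderiv ℝ (⇑v) p (eSpace n i)) q (eSpace n i)
        = SchwartzMap.pderivCLM ℝ (eSpace n i) (SchwartzMap.pderivCLM ℝ (eSpace n i) v) q := by
    intro i
    have hco : (fun p : SpaceTime n => fderiv ℝ (⇑v) p (eSpace n i))
        = ⇑(SchwartzMap.pderivCLM ℝ (eSpace n i) v) := by
      funext p
      rw [SchwartzMap.pderivCLM_apply]
    rw [hco, SchwartzMap.pderivCLM_apply]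
  rw [h1]
  congr 1

lemma heatOp_iter_coe (m : ℕ) (v : SchwartzMap (SpaceTime n) ℂ) :
    (heatOp n)^[m] (⇑v) = ⇑((Hs n)^[m] v) := by
  induction m generalizing v with
  | zero => rfl
  | succ m ih =>
      rw [Function.iterate_succ_apply, Function.iterate_succ_apply, heatOp_coe, ih]

lemma iteratedDeriv_congr_nhds {m : ℕ} :
    ∀ {f g : ℝ → ℂ} {x : ℝ}, f =ᶠ[nhds x] g → iteratedDeriv m f x = iteratedDeriv m g x := by
  induction m with
  | zero =>
      intro f g x h
      simpa [iteratedDeriv_zero] using h.eq_of_nhds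
  | succ m ih =>
      intro f g x h
      rw [iteratedDeriv_succ', iteratedDeriv_succ']
      exact ih h.deriv

lemma iteratedDeriv_neg' (m : ℕ) (f : ℝ → ℂ) (x : ℝ) :
    iteratedDeriv m (fun y => -f y) x = -iteratedDeriv m f x := by
  induction m generalizing f x with
  | zero => simp [iteratedDeriv_zero]
  | succ m ih =>
      rw [iteratedDeriv_succ', iteratedDeriv_succ']
      have : deriv (fun y => -f y) = fun y => -deriv f y := by
        funext y
        exact deriv.neg
      rw [this]
      exact ih (deriv f) x

lemma main_induction (m : ℕ) :
    ∀ v : SchwartzMap (SpaceTime n) ℂ, ∀ τ : ℝ, 0 < τ → ∀ p : SpaceTime n,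
      heatSemigroup n τ (⇑((Hs n)^[m] v)) p
        = (-1 : ℂ) ^ m * iteratedDeriv m (fun τ' => heatSemigroup n τ' (⇑v) p) τ := by
  induction m with
  | zero =>
      intro v τ hτ p
      simp [iteratedDeriv_zero]
  | succ m ih =>
      intro v τ hτ p
      have hEq : deriv (fun τ' : ℝ => heatSemigroup n τ' (⇑v) p)
          =ᶠ[nhds τ] fun τ' : ℝ => -(heatSemigroup n τ' (⇑(Hs n v)) p) := by
        have hmem : Ioi (0:ℝ) ∈ nhds τ := isOpen_Ioi.mem_nhds hτ
        filter_upwards [hmem] with τ' hτ'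
        exact (key_deriv v p hτ').deriv
      calc heatSemigroup n τ (⇑((Hs n)^[m+1] v)) p
          = heatSemigroup n τ (⇑((Hs n)^[m] (Hs n v))) p := by
            rw [Function.iterate_succ_apply]
        _ = (-1 : ℂ) ^ m * iteratedDeriv m
              (fun τ' => heatSemigroup n τ' (⇑(Hs n v)) p) τ := ih (Hs n v) τ hτ p
        _ = (-1 : ℂ) ^ (m+1) * iteratedDeriv (m+1)
              (fun τ' => heatSemigroup n τ' (⇑v) p) τ := by
            rw [iteratedDeriv_succ']
            rw [iteratedDeriv_congr_nhds hEq]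
            rw [iteratedDeriv_neg']
            ring


/-!
The intertwining identity (3.14) of the paper (constant-coefficient case):
`e^{-τ𝓗}((∂_t - Δ)^m u) = (-1)^m ∂_τ^m (e^{-τ𝓗} u)` for Schwartz `u` and `τ > 0`.
-/

theorem heatSemigroup_intertwines_heatOp
    (n : ℕ) (hn : 1 ≤ n) (u : SchwartzMap (SpaceTime n) ℂ) (m : ℕ) (hm : 1 ≤ m) :
    ∀ τ : ℝ, 0 < τ → ∀ p : SpaceTime n,
      heatSemigroup n τ ((heatOp n)^[m] ⇑u) p
        = (-1 : ℂ) ^ m * iteratedDeriv m (fun τ' => heatSemigroup n τ' (⇑u) p) τ := by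
  intro τ hτ p
  rw [heatOp_iter_coe]
  exact main_induction m u τ hτ p

end
end
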